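/- arXiv:1708.05476 — 2 statements merged into one kernel-verified Lean document; each statement's English description precedes it below -/
import Mathlib

section
/- On the weighted line graph (ℤ, E) with edges {i,i+1}, ν = deg, μ_{0,1} = ε and μ_{i,i+1} = 1 for i ≠ 0: for p ∈ (1,2), there is no constant C independent of ε ∈ (0,1) such that ‖|∇f|‖_{ℓ^p(V,deg)} ≤ C ‖|Df|‖_{ℓ^p(E,μ)} for all finitely supported f. Specifically, testing with f_k(i) = max{1 - i/k, 0} for i ≥ 1 and f_k(i) = 0 for i ≤ 0 and letting k → ∞ forces ε^{1/2} ≤ C ε^{1/p}, which fails for small ε. -/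
/-- Edge weights on the line graph `ℤ`: the edge `{0,1}` has weight `ε`, all other
nearest-neighbor edges have weight `1`, non-edges have weight `0`. -/
noncomputable def lineMu (ε : ℝ) (i j : ℤ) : ℝ :=
  if j = i + 1 ∨ i = j + 1 then
    (if (i = 0 ∧ j = 1) ∨ (i = 1 ∧ j = 0) then ε else 1)
  else 0

open Real Finset

lemma lineMu_nonneg {ε : ℝ} (hε : 0 ≤ ε) (i j : ℤ) : 0 ≤ lineMu ε i j := by
  unfold lineMu
  split
  · split
    · exact hε
    · norm_num
  · exact le_refl 0

lemma lineMu_eq_zero (ε : ℝ) {i j : ℤ} (h1 : j ≠ i - 1) (h2 : j ≠ i + 1) :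
    lineMu ε i j = 0 := by
  unfold lineMu
  rw [if_neg (by omega)]

lemma lineMu_right (ε : ℝ) (i : ℤ) : lineMu ε i (i + 1) = if i = 0 then ε else 1 := by
  unfold lineMu
  rw [if_pos (Or.inl rfl)]
  by_cases h : i = 0
  · subst h; norm_num
  · rw [if_neg (by omega), if_neg h]

lemma lineMu_left (ε : ℝ) (i : ℤ) : lineMu ε i (i - 1) = if i = 1 then ε else 1 := by
  unfold lineMu
  rw [if_pos (Or.inr (by omega))]
  by_cases h : i = 1
  · subst h; norm_num
  · rw [if_neg (by omega), if_neg h]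

lemma tsum_pair {g : ℤ → ℝ} {a b : ℤ} (hab : a ≠ b)
    (h : ∀ j, j ≠ a → j ≠ b → g j = 0) : ∑' j, g j = g a + g b := by
  rw [tsum_eq_sum (s := {a, b}) (by
    intro j hj
    simp only [Finset.mem_insert, Finset.mem_singleton, not_or] at hj
    exact h j hj.1 hj.2)]
  exact Finset.sum_pair hab

lemma tsum_lineMu_mul (ε : ℝ) (i : ℤ) (g : ℤ → ℝ) :
    ∑' j, lineMu ε i j * g j
      = lineMu ε i (i - 1) * g (i - 1) + lineMu ε i (i + 1) * g (i + 1) :=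
  tsum_pair (by omega) (fun j h1 h2 => by rw [lineMu_eq_zero ε h1 h2, zero_mul])

lemma tsum_lineMu (ε : ℝ) (i : ℤ) :
    ∑' j, lineMu ε i j = (if i = 1 then ε else 1) + (if i = 0 then ε else 1) := by
  rw [tsum_pair (g := fun j => lineMu ε i j) (a := i - 1) (b := i + 1) (by omega)
    (fun j h1 h2 => lineMu_eq_zero ε h1 h2), lineMu_left, lineMu_right]

noncomputable def ramp (k : ℤ) (j : ℤ) : ℝ :=
  if 1 ≤ j ∧ j < k then ((k - j : ℤ) : ℝ) / (k : ℝ) else 0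

lemma ramp_zero {k j : ℤ} (h : j ≤ 0 ∨ k ≤ j) : ramp k j = 0 := by
  unfold ramp; rw [if_neg (by omega)]

lemma ramp_val {k j : ℤ} (h1 : 1 ≤ j) (h2 : j ≤ k) : ramp k j = ((k - j : ℤ) : ℝ) / (k : ℝ) := by
  unfold ramp
  by_cases h : j < k
  · rw [if_pos ⟨h1, h⟩]
  · rw [if_neg (by omega), show k - j = 0 by omega]
    norm_num

lemma ramp_diff_right {k : ℤ} (hk : 2 ≤ k) {i : ℤ} (hi : i ≠ 0) :
    |ramp k i - ramp k (i + 1)| ≤ 1 / (k : ℝ) := by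
  have hk0 : (0:ℝ) < (k:ℝ) := by exact_mod_cast (by omega : (0:ℤ) < k)
  rcases lt_or_ge i 0 with h | h
  · rw [ramp_zero (Or.inl (by omega)), ramp_zero (Or.inl (by omega))]
    simp; positivity
  rcases le_or_gt k i with h' | h'
  · rw [ramp_zero (Or.inr h'), ramp_zero (Or.inr (by omega))]
    simp; positivity
  · have hi1 : 1 ≤ i := by omega
    rw [ramp_val hi1 (by omega), ramp_val (by omega) (by omega), div_sub_div_same]
    rw [show ((k - i : ℤ) : ℝ) - ((k - (i + 1) : ℤ) : ℝ) = 1 by push_cast; ring]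
    rw [abs_of_nonneg (by positivity)]

lemma ramp_diff_left {k : ℤ} (hk : 2 ≤ k) {i : ℤ} (hi : i ≠ 1) :
    |ramp k i - ramp k (i - 1)| ≤ 1 / (k : ℝ) := by
  have hk0 : (0:ℝ) < (k:ℝ) := by exact_mod_cast (by omega : (0:ℤ) < k)
  rcases le_or_gt i 0 with h | h
  · rw [ramp_zero (Or.inl h), ramp_zero (Or.inl (by omega))]
    simp; positivity
  rcases le_or_gt i k with h' | h'
  · have hi2 : 2 ≤ i := by omega
    rw [ramp_val (by omega) h', ramp_val (by omega) (by omega), div_sub_div_same]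
    rw [show ((k - i : ℤ) : ℝ) - ((k - (i - 1) : ℤ) : ℝ) = -1 by push_cast; ring]
    rw [abs_div, abs_neg, abs_one, abs_of_nonneg hk0.le]
  · rw [ramp_zero (Or.inr (by omega)), ramp_zero (Or.inr (by omega))]
    simp; positivity


set_option maxHeartbeats 2000000 in
theorem line_graph_counterexample (p : ℝ) (hp1 : 1 < p) (hp2 : p < 2) :
    ¬ ∃ C : ℝ, ∀ ε : ℝ, 0 < ε → ε < 1 →
      ∀ f : ℤ → ℝ, (Function.support f).Finite →
        (∑' i, Real.sqrt ((∑' j, lineMu ε i j * (f i - f j) ^ 2) / (2 * ∑' j, lineMu ε i j)) ^ p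
            * ∑' j, lineMu ε i j) ^ (1 / p)
          ≤ C * ((1 / 2) * ∑' i, ∑' j, lineMu ε i j * |f i - f j| ^ p) ^ (1 / p) := by
  rintro ⟨C, hC⟩
  have hp0 : 0 < p := by linarith
  have hp_ne : p ≠ 0 := hp0.ne'
  have key : ∀ ε : ℝ, 0 < ε → ε < 1 →
      ∃ t : ℝ, 0 ≤ t ∧ t ≤ 2 * ε ∧ Real.sqrt ε / 4 ≤ C * t ^ (1 / p) := by
    intro ε hε0 hε1
    have hp1' : (0:ℝ) < p - 1 := by linarith
    obtain ⟨n, hn⟩ := exists_nat_ge (max 2 ((2 / ε) ^ (1 / (p - 1))))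
    set k : ℤ := (n : ℤ) with hk_def
    have hkR : (2:ℝ) ≤ (k:ℝ) := by
      rw [hk_def]; push_cast
      exact le_trans (le_max_left _ _) hn
    have hk2 : (2:ℤ) ≤ k := by exact_mod_cast hkR
    have hk0R : (0:ℝ) < (k:ℝ) := by linarith
    have hkpow : 2 / ε ≤ (k:ℝ) ^ (p - 1) := by
      have h1 : (2/ε) ^ (1/(p-1)) ≤ (k:ℝ) := by
        rw [hk_def]; push_cast
        exact le_trans (le_max_right _ _) hn
      calc 2/ε = ((2/ε) ^ (1/(p-1))) ^ (p-1) := by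
            rw [← Real.rpow_mul (by positivity), show 1/(p-1)*(p-1) = 1 by field_simp,
              Real.rpow_one]
        _ ≤ (k:ℝ) ^ (p-1) := Real.rpow_le_rpow (by positivity) h1 hp1'.le
    have hkε : ((k:ℝ) + 1) * (1/(k:ℝ)) ^ p ≤ ε := by
      have h2 : 2 ≤ ε * (k:ℝ)^(p-1) := by
        rw [div_le_iff₀ hε0] at hkpow; linarith
      have hkp : (k:ℝ) ^ p = (k:ℝ) * (k:ℝ)^(p-1) := by
        have h3 := Real.rpow_add hk0R 1 (p-1)
        rw [Real.rpow_one, show (1:ℝ)+(p-1) = p by ring] at h3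
        exact h3
      have h5 : 0 < (k:ℝ)^p := Real.rpow_pos_of_pos hk0R p
      rw [one_div, Real.inv_rpow hk0R.le, ← div_eq_mul_inv, div_le_iff₀ h5]
      rw [hkp]
      nlinarith [mul_le_mul_of_nonneg_left h2 (le_of_lt hk0R)]
    -- the test function
    have hsupp : (Function.support (ramp k)).Finite := by
      apply Set.Finite.subset (Set.finite_Icc (1:ℤ) (k-1))
      intro i hi
      rw [Set.mem_Icc]
      by_contra hcon
      exact hi (ramp_zero (by omega))
    have hineq := hC ε hε0 hε1 (ramp k) hsupp
    set F : ℤ → ℝ := fun i => Real.sqrt ((∑' j, lineMu ε i j * (ramp k i - ramp k j) ^ 2)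
        / (2 * ∑' j, lineMu ε i j)) ^ p * ∑' j, lineMu ε i j with hF
    set G : ℤ → ℝ := fun i => ∑' j, lineMu ε i j * |ramp k i - ramp k j| ^ p with hG
    have hdeg_pos : ∀ i : ℤ, 0 < ∑' j, lineMu ε i j := by
      intro i
      rw [tsum_lineMu]
      split_ifs <;> linarith
    have hterm_nonneg : ∀ i : ℤ, 0 ≤ F i := fun i =>
      mul_nonneg (Real.rpow_nonneg (Real.sqrt_nonneg _) p) (hdeg_pos i).le
    have hterm_zero : ∀ i ∉ Finset.Icc (0:ℤ) k, F i = 0 := by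
      intro i hi
      rw [Finset.mem_Icc] at hi
      have h0 : ∀ j : ℤ, i - 1 ≤ j → j ≤ i + 1 → ramp k j = 0 := by
        intro j hj1 hj2; exact ramp_zero (by omega)
      have hN : (∑' j, lineMu ε i j * (ramp k i - ramp k j) ^ 2) = 0 := by
        rw [tsum_lineMu_mul, h0 i (by omega) (by omega), h0 (i-1) (by omega) (by omega),
          h0 (i+1) (by omega) (by omega)]
        ring
      rw [hF]
      simp only []
      rw [hN, zero_div, Real.sqrt_zero, Real.zero_rpow hp_ne, zero_mul]
    have hsum : Summable F := summable_of_ne_finset_zero hterm_zero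
    have hdeg0 : ∑' j, lineMu ε 0 j = 1 + ε := by
      rw [tsum_lineMu]; norm_num
    have hf1 : ramp k 1 = ((k - 1 : ℤ) : ℝ) / (k : ℝ) := ramp_val le_rfl (by omega)
    have hf1l : 1/2 ≤ ramp k 1 := by
      rw [hf1, le_div_iff₀ hk0R]; push_cast; linarith
    have hf1u : ramp k 1 ≤ 1 := by
      rw [hf1, div_le_one hk0R]; push_cast; linarith
    have hN0 : (∑' j, lineMu ε 0 j * (ramp k 0 - ramp k j) ^ 2) = ε * (ramp k 1)^2 := by
      have e1 : ramp k 0 = 0 := ramp_zero (Or.inl le_rfl)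
      have e2 : ramp k (0 - 1) = 0 := ramp_zero (Or.inl (by omega))
      rw [tsum_lineMu_mul, lineMu_left, lineMu_right, e1, e2]
      norm_num
    have harg : ε / 16 ≤ (ε * (ramp k 1)^2) / (2 * (1 + ε)) := by
      rw [div_le_div_iff₀ (by norm_num) (by linarith)]
      nlinarith [mul_nonneg hε0.le (sq_nonneg (ramp k 1 - 1/2)), hf1l, hε0, hε1]
    have hsqrt16 : Real.sqrt (ε/16) = Real.sqrt ε / 4 := by
      rw [show (4:ℝ) = Real.sqrt 16 by
        rw [show (16:ℝ) = 4^2 by norm_num, Real.sqrt_sq (by norm_num)]]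
      rw [Real.sqrt_div hε0.le]
    have hterm0 : (Real.sqrt ε / 4) ^ p ≤ F 0 := by
      rw [hF]
      simp only []
      rw [hN0, hdeg0]
      have h1 : Real.sqrt ε / 4 ≤ Real.sqrt (ε * (ramp k 1)^2 / (2*(1+ε))) := by
        rw [← hsqrt16]; exact Real.sqrt_le_sqrt harg
      have h2 : (Real.sqrt ε / 4)^p ≤ Real.sqrt (ε * (ramp k 1)^2 / (2*(1+ε)))^p :=
        Real.rpow_le_rpow (by positivity) h1 hp0.le
      nlinarith [Real.rpow_nonneg (Real.sqrt_nonneg (ε * (ramp k 1)^2 / (2*(1+ε)))) p, hε0]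
    have hSge : (Real.sqrt ε / 4) ^ p ≤ ∑' i, F i :=
      le_trans hterm0 (Summable.le_tsum hsum 0 (fun j _ => hterm_nonneg j))
    have hLHS : Real.sqrt ε / 4 ≤ (∑' i, F i) ^ (1/p) := by
      have h4 := Real.rpow_le_rpow (by positivity) hSge (by positivity : (0:ℝ) ≤ 1/p)
      rwa [← Real.rpow_mul (by positivity : (0:ℝ) ≤ Real.sqrt ε / 4), mul_one_div,
        div_self hp_ne, Real.rpow_one] at h4
    -- RHS bounds
    have hG_nonneg : ∀ i, 0 ≤ G i := fun i =>
      tsum_nonneg (fun j => mul_nonneg (lineMu_nonneg hε0.le i j)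
        (Real.rpow_nonneg (abs_nonneg _) p))
    have hG_zero : ∀ i ∉ Finset.Icc (0:ℤ) k, G i = 0 := by
      intro i hi
      rw [Finset.mem_Icc] at hi
      have h0 : ∀ j : ℤ, i - 1 ≤ j → j ≤ i + 1 → ramp k j = 0 :=
        fun j hj1 hj2 => ramp_zero (by omega)
      rw [hG]
      simp only []
      rw [tsum_lineMu_mul, h0 i (by omega) (by omega), h0 (i-1) (by omega) (by omega),
        h0 (i+1) (by omega) (by omega)]
      simp [Real.zero_rpow hp_ne]
    have hclaimR : ∀ i : ℤ, lineMu ε i (i+1) * |ramp k i - ramp k (i+1)| ^ p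
        ≤ (if i = 0 then ε else 0) + (1/(k:ℝ)) ^ p := by
      intro i
      rw [lineMu_right]
      by_cases h : i = 0
      · subst h
        rw [if_pos rfl, if_pos rfl]
        have e1 : ramp k 0 = 0 := ramp_zero (Or.inl le_rfl)
        have habs : |ramp k (0:ℤ) - ramp k ((0:ℤ)+1)| ≤ 1 := by
          rw [show ((0:ℤ)+1) = 1 by norm_num, e1, zero_sub, abs_neg,
            abs_of_nonneg (by linarith : (0:ℝ) ≤ ramp k 1)]
          exact hf1u
        have hpow : |ramp k (0:ℤ) - ramp k ((0:ℤ)+1)| ^ p ≤ 1 :=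
          Real.rpow_le_one (abs_nonneg _) habs hp0.le
        have hmul := mul_le_mul_of_nonneg_left hpow hε0.le
        have hnn : (0:ℝ) ≤ (1/(k:ℝ)) ^ p := Real.rpow_nonneg (by positivity) p
        refine le_trans hmul ?_
        rw [mul_one]
        exact le_add_of_nonneg_right hnn
      · rw [if_neg h, if_neg h, one_mul, zero_add]
        exact Real.rpow_le_rpow (abs_nonneg _) (ramp_diff_right hk2 h) hp0.le
    have hclaimL : ∀ i : ℤ, lineMu ε i (i-1) * |ramp k i - ramp k (i-1)| ^ p
        ≤ (if i = 1 then ε else 0) + (1/(k:ℝ)) ^ p := by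
      intro i
      rw [lineMu_left]
      by_cases h : i = 1
      · subst h
        rw [if_pos rfl, if_pos rfl]
        have e1 : ramp k ((1:ℤ)-1) = 0 := ramp_zero (Or.inl (by omega))
        have habs : |ramp k (1:ℤ) - ramp k ((1:ℤ)-1)| ≤ 1 := by
          rw [e1, sub_zero, abs_of_nonneg (by linarith : (0:ℝ) ≤ ramp k 1)]
          exact hf1u
        have hpow : |ramp k (1:ℤ) - ramp k ((1:ℤ)-1)| ^ p ≤ 1 :=
          Real.rpow_le_one (abs_nonneg _) habs hp0.le
        have hmul := mul_le_mul_of_nonneg_left hpow hε0.le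
        have hnn : (0:ℝ) ≤ (1/(k:ℝ)) ^ p := Real.rpow_nonneg (by positivity) p
        refine le_trans hmul ?_
        rw [mul_one]
        exact le_add_of_nonneg_right hnn
      · rw [if_neg h, if_neg h, one_mul, zero_add]
        exact Real.rpow_le_rpow (abs_nonneg _) (ramp_diff_left hk2 h) hp0.le
    have hGbound : ∀ i ∈ Finset.Icc (0:ℤ) k, G i ≤
        ((if i = 0 then ε else 0) + (if i = 1 then ε else 0) + 2 * (1/(k:ℝ)) ^ p) := by
      intro i _
      rw [hG]
      simp only []
      rw [tsum_lineMu_mul]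
      have hA := hclaimR i
      have hB := hclaimL i
      linarith
    have hGsum : ∑' i, G i ≤ 2 * ε + ((k:ℝ)+1) * (2 * (1/(k:ℝ)) ^ p) := by
      rw [tsum_eq_sum hG_zero]
      calc ∑ i ∈ Finset.Icc (0:ℤ) k, G i
          ≤ ∑ i ∈ Finset.Icc (0:ℤ) k, ((if i = 0 then ε else 0) + (if i = 1 then ε else 0)
              + 2 * (1/(k:ℝ)) ^ p) := Finset.sum_le_sum hGbound
        _ = 2 * ε + ((k:ℝ)+1) * (2 * (1/(k:ℝ)) ^ p) := by
            rw [Finset.sum_add_distrib, Finset.sum_add_distrib, Finset.sum_const,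
              Finset.sum_ite_eq' _ (0:ℤ) (fun _ => ε), Finset.sum_ite_eq' _ (1:ℤ) (fun _ => ε)]
            rw [if_pos (by rw [Finset.mem_Icc]; omega), if_pos (by rw [Finset.mem_Icc]; omega)]
            rw [nsmul_eq_mul]
            have hcard : ((Finset.Icc (0:ℤ) k).card : ℝ) = (k:ℝ) + 1 := by
              rw [Int.card_Icc]
              have h' : (((k + 1 - 0).toNat : ℤ) : ℝ) = ((k:ℝ) + 1 - 0) := by
                rw [Int.toNat_of_nonneg (by omega)]; push_cast; ring
              push_cast at h' ⊢
              linarith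
            rw [hcard]; ring
    refine ⟨(1/2) * ∑' i, G i, ?_, ?_, le_trans hLHS hineq⟩
    · have h6 : 0 ≤ ∑' i, G i := tsum_nonneg hG_nonneg
      linarith
    · have h6 : ((k:ℝ)+1) * (2 * (1/(k:ℝ))^p) ≤ 2 * ε := by nlinarith [hkε]
      linarith [hGsum]
  rcases le_or_gt C 0 with hCle | hCpos
  · obtain ⟨t, ht0, _, hle⟩ := key (1/2) (by norm_num) (by norm_num)
    have h1 : 0 < Real.sqrt (1/2) / 4 := by positivity
    have h2 : C * t ^ (1/p) ≤ 0 := by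
      nlinarith [Real.rpow_nonneg ht0 (1/p), hCle]
    linarith
  · have hδ : 0 < 1/p - 1/2 := by
      have h1 : (1:ℝ)/2 < 1/p := by
        rw [div_lt_div_iff₀ (by norm_num) hp0]; linarith
      linarith
    set δ : ℝ := 1/p - 1/2 with hδdef
    set ε : ℝ := min (1/2) ((1/(16*C)) ^ (1/δ)) with hεdef
    have hε0 : 0 < ε := lt_min (by norm_num) (Real.rpow_pos_of_pos (by positivity) _)
    have hε1 : ε < 1 := lt_of_le_of_lt (min_le_left _ _) (by norm_num)
    obtain ⟨t, ht0, ht2, hle⟩ := key ε hε0 hε1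
    have hεδ : ε ^ δ ≤ 1/(16*C) := by
      calc ε ^ δ ≤ ((1/(16*C)) ^ (1/δ)) ^ δ :=
            Real.rpow_le_rpow hε0.le (min_le_right _ _) hδ.le
        _ = 1/(16*C) := by
            rw [← Real.rpow_mul (by positivity), show 1/δ*δ = 1 by field_simp, Real.rpow_one]
    have h2e : t ^ (1/p) ≤ (2*ε) ^ (1/p) := Real.rpow_le_rpow ht0 ht2 (by positivity)
    have h3 : (2*ε) ^ (1/p) ≤ 2 * ε ^ (1/p) := by
      rw [Real.mul_rpow (by norm_num) hε0.le]
      have h31 : (2:ℝ) ^ (1/p) ≤ 2 ^ (1:ℝ) :=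
        Real.rpow_le_rpow_of_exponent_le (by norm_num) (by rw [div_le_one hp0]; linarith)
      rw [Real.rpow_one] at h31
      nlinarith [Real.rpow_nonneg hε0.le (1/p)]
    have h4 : Real.sqrt ε ≤ 8 * C * ε ^ (1/p) := by
      have h41 := le_trans hle (mul_le_mul_of_nonneg_left (le_trans h2e h3) hCpos.le)
      nlinarith
    have h5 : ε ^ ((1:ℝ)/2) ≤ 8 * C * ε ^ (1/p) := by
      rw [← Real.sqrt_eq_rpow]; exact h4
    have h6 : ε ^ ((1:ℝ)/2) = ε ^ (1/p) * ε ^ (-δ) := by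
      rw [← Real.rpow_add hε0]
      congr 1
      rw [hδdef]; ring
    have hεp : 0 < ε ^ ((1:ℝ)/p) := Real.rpow_pos_of_pos hε0 _
    have h7 : ε ^ (-δ) ≤ 8 * C := by
      rw [h6] at h5
      rw [mul_comm] at h5
      exact le_of_mul_le_mul_right h5 hεp
    have h8 : 0 < ε ^ δ := Real.rpow_pos_of_pos hε0 _
    have h9 : ε ^ (-δ) = (ε ^ δ)⁻¹ := Real.rpow_neg hε0.le δ
    have h10 : 16 * C ≤ (ε ^ δ)⁻¹ := by
      have h11 := inv_anti₀ h8 hεδ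
      rwa [one_div, inv_inv] at h11
    rw [h9] at h7
    linarith
end

section
/- Let G = (V,E,ν,μ) be a locally finite weighted graph with M := sup_x deg_x/ν_x < ∞ and let p ∈ (1,2]. There is a constant C = C(p,M) such that for any finitely supported f : V → ℝ with f ≥ 0, ‖|Df|‖_{ℓ^p(E,μ)} ≤ C ‖√(Γ_p(f))‖_{ℓ^p(V,ν)}, where Γ_p(f)(x) = Σ_y (μ_{xy}/ν_x) γ_p(f(x), f(y)) and γ_p(α,β) = pα(α-β) - α^{2-p}(α^p - β^p). -/
/-!
Bernoulli's inequality gives `γ_p ≥ 0`, and AM-GM applied to `α^(2-p) β^p` and `α^p β^(2-p)`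
gives `γ_p(α,β) + γ_p(β,α) ≥ (p-1)(α-β)²`; with the subadditivity of `t ↦ t^(p/2)` this yields
`|α-β|^p ≤ (p-1)^(-p/2) (γ_p(α,β)^(p/2) + γ_p(β,α)^(p/2))`. Summing over the (symmetric) edges
bounds the edge norm by `Σ_x Σ_y μ_xy γ_p(f x, f y)^(p/2)`, and at each vertex Hölder's inequality with
weights `μ_xy`, together with `Σ_y μ_xy ≤ M ν_x`, bounds the inner sum by
`M^(1-p/2) Γ_p(f)(x)^(p/2) ν_x`.
-/

/-- `γ_p(α,β) = pα(α-β) - α^(2-p)(α^p - β^p)`, with real powers (`0^t = 0` for `t > 0`). -/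
noncomputable def gammaP (p α β : ℝ) : ℝ :=
  p * α * (α - β) - α ^ (2 - p) * (α ^ p - β ^ p)

open Real Function

section Pointwise

variable {p α β : ℝ}

lemma rpow_two_sub_mul_rpow {a : ℝ} (ha : 0 ≤ a) (p : ℝ) : a ^ (2 - p) * a ^ p = a ^ 2 := by
  rw [← rpow_add' ha (by norm_num), sub_add_cancel, rpow_two]

lemma gammaP_zero_zero (p : ℝ) : gammaP p 0 0 = 0 := by
  simp [gammaP]

lemma gammaP_nonneg (hp : 1 ≤ p) (hα : 0 ≤ α) (hβ : 0 ≤ β) : 0 ≤ gammaP p α β := by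
  rcases hα.eq_or_lt with rfl | hα
  · have := mul_nonneg (rpow_nonneg le_rfl (2 - p)) (rpow_nonneg hβ p)
    simp only [gammaP, zero_rpow (by linarith : p ≠ 0)]
    linarith
  -- Bernoulli's inequality at `β / α` is the tangent-line bound
  -- `β ^ p ≥ α ^ p + p α ^ (p-1) (β - α)`; multiplying it by `α ^ (2 - p)` gives `γ_p ≥ 0`.
  have bernoulli := one_add_mul_self_le_rpow_one_add (s := β / α - 1) (by
    linarith [div_nonneg hβ hα.le]) hp
  rw [add_sub_cancel, div_rpow hβ hα.le, le_div_iff₀ (rpow_pos_of_pos hα p), mul_comm] at bernoulli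
  have tangent := mul_le_mul_of_nonneg_left bernoulli (rpow_nonneg hα.le (2 - p))
  have expand : α ^ (2 - p) * (α ^ p * (1 + p * (β / α - 1))) = α ^ 2 + p * α * (β - α) := by
    rw [← mul_assoc, rpow_two_sub_mul_rpow hα.le]
    field_simp
  have := rpow_two_sub_mul_rpow hα.le p
  unfold gammaP
  linarith

lemma mul_sq_sub_le_gammaP_add_gammaP (hα : 0 ≤ α) (hβ : 0 ≤ β) :
    (p - 1) * (α - β) ^ 2 ≤ gammaP p α β + gammaP p β α := by
  have hα2 := rpow_two_sub_mul_rpow hα p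
  have hβ2 := rpow_two_sub_mul_rpow hβ p
  set u := α ^ (2 - p) * β ^ p
  set v := α ^ p * β ^ (2 - p)
  have huv : u * v = (α * β) ^ 2 := by linear_combination β ^ p * β ^ (2 - p) * hα2 + α ^ 2 * hβ2
  have amgm : 2 * (α * β) ≤ u + v := by
    nlinarith [sq_nonneg (u - v), mul_nonneg (rpow_nonneg hα (2 - p)) (rpow_nonneg hβ p),
      mul_nonneg (rpow_nonneg hα p) (rpow_nonneg hβ (2 - p)), mul_nonneg hα hβ]
  unfold gammaP
  linarith

lemma abs_sub_rpow_le_gammaP (hp1 : 1 < p) (hp2 : p ≤ 2) (hα : 0 ≤ α) (hβ : 0 ≤ β) :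
    |α - β| ^ p ≤ (p - 1)⁻¹ ^ (p / 2) * (gammaP p α β ^ (p / 2) + gammaP p β α ^ (p / 2)) := by
  have hγ := gammaP_nonneg hp1.le hα hβ
  have hγ' := gammaP_nonneg hp1.le hβ hα
  have hp : 0 < p - 1 := sub_pos.2 hp1
  calc |α - β| ^ p = ((α - β) ^ 2) ^ (p / 2) := by
        rw [← sq_abs, ← rpow_natCast, ← rpow_mul (abs_nonneg _)]
        ring_nf
    _ ≤ ((p - 1)⁻¹ * (gammaP p α β + gammaP p β α)) ^ (p / 2) := by
        gcongr
        rw [inv_mul_eq_div, le_div_iff₀ hp, mul_comm]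
        exact mul_sq_sub_le_gammaP_add_gammaP hα hβ
    _ = (p - 1)⁻¹ ^ (p / 2) * (gammaP p α β + gammaP p β α) ^ (p / 2) :=
        mul_rpow (by positivity) (by positivity)
    _ ≤ (p - 1)⁻¹ ^ (p / 2) * (gammaP p α β ^ (p / 2) + gammaP p β α ^ (p / 2)) := by
        gcongr
        exact rpow_add_le_add_rpow hγ hγ' (by positivity) (by linarith)

end Pointwise

lemma tsum_mul_rpow_le_of_support_finite {ι : Type*} {w a : ι → ℝ} (hw : (support w).Finite)
    (hw0 : ∀ i, 0 ≤ w i) (ha : ∀ i, 0 ≤ a i) {θ : ℝ} (hθ0 : 0 < θ) (hθ1 : θ ≤ 1) :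
    ∑' i, w i * a i ^ θ ≤ (∑' i, w i) ^ (1 - θ) * (∑' i, w i * a i) ^ θ := by
  have hs : support w ⊆ hw.toFinset := by simp
  rw [tsum_eq_sum' hs, tsum_eq_sum' ((support_mul_subset_left _ _).trans hs),
    tsum_eq_sum' ((support_mul_subset_left _ _).trans hs)]
  have holder := inner_le_weight_mul_Lp_of_nonneg hw.toFinset (one_le_inv₀ hθ0 |>.2 hθ1) w
    (fun i => a i ^ θ) hw0 (fun i => rpow_nonneg (ha i) θ)
  simpa only [inv_inv, rpow_rpow_inv (ha _) hθ0.ne'] using holder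

lemma tsum_mul_rpow_half_le {ι : Type*} {w a : ι → ℝ} (hw : (support w).Finite)
    (hw0 : ∀ i, 0 ≤ w i) (ha : ∀ i, 0 ≤ a i) {p M ν : ℝ} (hp0 : 0 < p) (hp2 : p ≤ 2)
    (hM : 0 ≤ M) (hν : 0 < ν) (hwM : (∑' i, w i) / ν ≤ M) :
    ∑' i, w i * a i ^ (p / 2) ≤ M ^ (1 - p / 2) * (√((∑' i, w i * a i) / ν) ^ p * ν) := by
  have hG : 0 ≤ ∑' i, w i * a i := tsum_nonneg fun i => mul_nonneg (hw0 i) (ha i)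
  calc ∑' i, w i * a i ^ (p / 2)
      ≤ (∑' i, w i) ^ (1 - p / 2) * (∑' i, w i * a i) ^ (p / 2) :=
        tsum_mul_rpow_le_of_support_finite hw hw0 ha (by positivity) (by linarith)
    _ ≤ (M * ν) ^ (1 - p / 2) * (∑' i, w i * a i) ^ (p / 2) := by
        gcongr
        · exact tsum_nonneg hw0
        · linarith
        · exact (div_le_iff₀ hν).1 hwM
    _ = M ^ (1 - p / 2) * (√((∑' i, w i * a i) / ν) ^ p * ν) := by
        rw [sqrt_eq_rpow, ← rpow_mul (by positivity), mul_rpow hM hν.le, div_rpow hG hν.le,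
          rpow_sub hν, rpow_one]
        field_simp

lemma Set.Finite.support_tsum_fiber {α β M : Type*} [AddCommMonoid M] [TopologicalSpace M]
    {g : α × β → M} (hg : (support g).Finite) : (support fun a => ∑' b, g (a, b)).Finite := by
  refine (hg.image Prod.fst).subset fun a ha => ?_
  by_contra hfst
  have hzero : ∀ b, g (a, b) = 0 := fun b => by_contra fun hb => hfst ⟨(a, b), hb, rfl⟩
  simp [hzero] at ha

section Graph

variable {V : Type*} {μ : V → V → ℝ} {f : V → ℝ} {p : ℝ}

lemma support_edge_finite (hsymm : ∀ x y, μ x y = μ y x) (hμ : ∀ x, (support (μ x)).Finite)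
    (hf : (support f).Finite) {F : ℝ → ℝ → ℝ} (hF : F 0 0 = 0) :
    (support fun e : V × V => μ e.1 e.2 * F (f e.1) (f e.2)).Finite := by
  refine ((hf.biUnion fun x _ => (Set.finite_singleton x).prod (hμ x)).union
    (hf.biUnion fun y _ => (hμ y).prod (Set.finite_singleton y))).subset ?_
  rintro ⟨x, y⟩ hxy
  have hμxy : μ x y ≠ 0 := left_ne_zero_of_mul hxy
  by_cases hx : f x = 0
  · have hy : f y ≠ 0 := fun hy => right_ne_zero_of_mul hxy (by rw [hx, hy, hF])
    exact Or.inr (Set.mem_biUnion hy ⟨by rwa [mem_support, hsymm], rfl⟩)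
  · exact Or.inl (Set.mem_biUnion hx ⟨rfl, hμxy⟩)

lemma summable_edge_gammaP_rpow (hp : 0 < p) (hsymm : ∀ x y, μ x y = μ y x)
    (hμ : ∀ x, (support (μ x)).Finite) (hf : (support f).Finite) :
    Summable fun e : V × V => μ e.1 e.2 * gammaP p (f e.1) (f e.2) ^ (p / 2) :=
  summable_of_hasFiniteSupport <|
    support_edge_finite hsymm hμ hf (F := fun a b => gammaP p a b ^ (p / 2))
      (by simp [gammaP_zero_zero, zero_rpow (by positivity : p / 2 ≠ 0)])

lemma tsum_edge_abs_sub_rpow_le (hp1 : 1 < p) (hp2 : p ≤ 2) (hsymm : ∀ x y, μ x y = μ y x)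
    (hμ0 : ∀ x y, 0 ≤ μ x y) (hμ : ∀ x, (support (μ x)).Finite) (hf : (support f).Finite)
    (hf0 : ∀ x, 0 ≤ f x) :
    ∑' x, ∑' y, μ x y * |f x - f y| ^ p ≤
      2 * (p - 1)⁻¹ ^ (p / 2) * ∑' e : V × V, μ e.1 e.2 * gammaP p (f e.1) (f e.2) ^ (p / 2) := by
  set K := (p - 1)⁻¹ ^ (p / 2)
  set g : V × V → ℝ := fun e => μ e.1 e.2 * gammaP p (f e.1) (f e.2) ^ (p / 2)
  have hg : Summable g := summable_edge_gammaP_rpow (by linarith) hsymm hμ hf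
  have hg_swap : Summable fun e : V × V => g e.swap := (Equiv.prodComm V V).summable_iff.2 hg
  have hswap : ∑' e : V × V, g e.swap = ∑' e, g e := (Equiv.prodComm V V).tsum_eq g
  have hsummable : Summable fun e : V × V => μ e.1 e.2 * |f e.1 - f e.2| ^ p :=
    summable_of_hasFiniteSupport <| support_edge_finite hsymm hμ hf (F := fun a b => |a - b| ^ p)
      (by simp [zero_rpow (by linarith : p ≠ 0)])
  rw [← hsummable.tsum_prod]
  calc ∑' e : V × V, μ e.1 e.2 * |f e.1 - f e.2| ^ p
      ≤ ∑' e, K * (g e + g e.swap) := by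
        refine hsummable.tsum_le_tsum (fun e => ?_) ((hg.add hg_swap).mul_left K)
        simp only [g, Prod.fst_swap, Prod.snd_swap, hsymm e.2 e.1]
        rw [← mul_add, mul_left_comm]
        exact mul_le_mul_of_nonneg_left (abs_sub_rpow_le_gammaP hp1 hp2 (hf0 _) (hf0 _)) (hμ0 _ _)
    _ = 2 * K * ∑' e, g e := by
        rw [tsum_mul_left, hg.tsum_add hg_swap, hswap]
        ring

lemma tsum_edge_gammaP_rpow_le {M : ℝ} (hp1 : 1 < p) (hp2 : p ≤ 2) (hM0 : 0 ≤ M) {ν : V → ℝ}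
    (hν : ∀ x, 0 < ν x) (hsymm : ∀ x y, μ x y = μ y x) (hμ0 : ∀ x y, 0 ≤ μ x y)
    (hμ : ∀ x, (support (μ x)).Finite) (hM : ∀ x, (∑' y, μ x y) / ν x ≤ M)
    (hf : (support f).Finite) (hf0 : ∀ x, 0 ≤ f x) :
    ∑' e : V × V, μ e.1 e.2 * gammaP p (f e.1) (f e.2) ^ (p / 2) ≤
      M ^ (1 - p / 2) * ∑' x, √((∑' y, μ x y * gammaP p (f x) (f y)) / ν x) ^ p * ν x := by
  have hp0 : 0 < p := by linarith
  have hg := summable_edge_gammaP_rpow hp0 hsymm hμ hf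
  have hΓ := (support_edge_finite hsymm hμ hf (gammaP_zero_zero p)).support_tsum_fiber
  have hnorm : Summable fun x => √((∑' y, μ x y * gammaP p (f x) (f y)) / ν x) ^ p * ν x := by
    refine summable_of_hasFiniteSupport (hΓ.subset fun x hx hΓx => hx ?_)
    simp only at hΓx
    simp [hΓx, zero_rpow hp0.ne']
  rw [hg.tsum_prod, ← tsum_mul_left]
  refine hg.prod.tsum_le_tsum (fun x => ?_) (hnorm.mul_left _)
  exact tsum_mul_rpow_half_le (hμ x) (hμ0 x) (fun y => gammaP_nonneg hp1.le (hf0 x) (hf0 y))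
    hp0 hp2 hM0 (hν x) (hM x)

end Graph

theorem edge_norm_le_pseudo_gradient_norm (p M : ℝ) (hp1 : 1 < p) (hp2 : p ≤ 2) (hM0 : 0 ≤ M) :
    ∃ C : ℝ, 0 < C ∧
      ∀ (V : Type) (ν : V → ℝ) (μ : V → V → ℝ),
        (∀ x, 0 < ν x) → (∀ x y, μ x y = μ y x) → (∀ x y, 0 ≤ μ x y) →
        (∀ x, (Function.support (μ x)).Finite) →
        (∀ x, (∑' y, μ x y) / ν x ≤ M) →
        ∀ f : V → ℝ, (Function.support f).Finite → (∀ x, 0 ≤ f x) →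
          ((1 / 2) * ∑' x, ∑' y, μ x y * |f x - f y| ^ p) ^ (1 / p)
            ≤ C * (∑' x,
                Real.sqrt ((∑' y, μ x y * gammaP p (f x) (f y)) / ν x) ^ p * ν x) ^ (1 / p) := by
  set K := (p - 1)⁻¹ ^ (p / 2)
  -- the `+ 1` keeps `C` positive when `M ^ (1 - p / 2) = 0`
  refine ⟨(K * M ^ (1 - p / 2) + 1) ^ (1 / p), by positivity, ?_⟩
  intro V ν μ hν hsymm hμ0 hμ hM f hf hf0
  set R := ∑' x, √((∑' y, μ x y * gammaP p (f x) (f y)) / ν x) ^ p * ν x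
  have hR : 0 ≤ R := tsum_nonneg fun x => by positivity [(hν x).le]
  have hedge : (1 / 2) * ∑' x, ∑' y, μ x y * |f x - f y| ^ p ≤ K * M ^ (1 - p / 2) * R :=
    calc (1 / 2) * ∑' x, ∑' y, μ x y * |f x - f y| ^ p
        ≤ (1 / 2) * (2 * K * ∑' e : V × V, μ e.1 e.2 * gammaP p (f e.1) (f e.2) ^ (p / 2)) := by
          gcongr
          exact tsum_edge_abs_sub_rpow_le hp1 hp2 hsymm hμ0 hμ hf hf0
      _ ≤ (1 / 2) * (2 * K * (M ^ (1 - p / 2) * R)) := by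
          gcongr
          exact tsum_edge_gammaP_rpow_le hp1 hp2 hM0 hν hsymm hμ0 hμ hM hf hf0
      _ = K * M ^ (1 - p / 2) * R := by ring
  calc ((1 / 2) * ∑' x, ∑' y, μ x y * |f x - f y| ^ p) ^ (1 / p)
      ≤ ((K * M ^ (1 - p / 2) + 1) * R) ^ (1 / p) := by
        refine rpow_le_rpow ?_ (hedge.trans ?_) (by positivity)
        · exact mul_nonneg (by norm_num) (tsum_nonneg fun x => tsum_nonneg fun y =>
            mul_nonneg (hμ0 x y) (by positivity))
        · exact mul_le_mul_of_nonneg_right (le_add_of_nonneg_right zero_le_one) hR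
    _ = (K * M ^ (1 - p / 2) + 1) ^ (1 / p) * R ^ (1 / p) := mul_rpow (by positivity) hR
end
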